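/- arXiv:1911.05962 — 2 statements merged into one kernel-verified Lean document; each statement's English description precedes it below -/
import Mathlib

section
/- Let Q be an n-dimensional smooth manifold and T_k*Q its k-cotangent bundle with projection π_Q and canonical two-forms Ω^κ = (π^κ)*Ω_Q, κ = 1,…,k. Let γ be a section of π_Q, let X = (X_1,…,X_k) be a k-vector field on T_k*Q and Y = (Y_1,…,Y_k) a k-vector field on Q. If the k-vector field X − T^kγ(Y) along the image of γ lies in the kernel of the map ♭ (i.e. Σ_{κ=1}^k ι_{X_κ − Tγ(Y_κ)}Ω^κ = 0 on the image of γ), then γ*(Σ_{κ=1}^k ι_{X_κ}Ω^κ) = Σ_{κ=1}^k ι_{Y_κ}(γ*Ω^κ). -/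
noncomputable section

open scoped BigOperators

variable {E F : Type*} [NormedAddCommGroup E] [NormedSpace ℝ E]
  [NormedAddCommGroup F] [NormedSpace ℝ F]

/-- The exterior derivative of a smooth function, as a one-form. -/
def extDer0 (f : E → ℝ) : E → E → ℝ := fun x v => fderiv ℝ f x v

/-- The exterior derivative of a one-form. -/
def extDer1 (α : E → E → ℝ) : E → E → E → ℝ := fun x u v =>
  fderiv ℝ (fun y => α y v) x u - fderiv ℝ (fun y => α y u) x v

/-- The exterior derivative of a two-form. -/
def extDer2 (ω : E → E → E → ℝ) : E → E → E → E → ℝ := fun x u v w =>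
  fderiv ℝ (fun y => ω y v w) x u - fderiv ℝ (fun y => ω y u w) x v +
    fderiv ℝ (fun y => ω y u v) x w

/-- Wedge product of two one-forms. -/
def wedge11 (α β : E → E → ℝ) : E → E → E → ℝ := fun x u v =>
  α x u * β x v - α x v * β x u

/-- Wedge product of a one-form with a two-form. -/
def wedge12 (θ : E → E → ℝ) (ω : E → E → E → ℝ) : E → E → E → E → ℝ := fun x u v w =>
  θ x u * ω x v w - θ x v * ω x u w + θ x w * ω x u v

/-- Pullback of a one-form along a smooth map. -/
def pb1 (φ : E → F) (α : F → F → ℝ) : E → E → ℝ := fun x v => α (φ x) (fderiv ℝ φ x v)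

/-- Pullback of a two-form along a smooth map. -/
def pb2 (φ : E → F) (ω : F → F → F → ℝ) : E → E → E → ℝ := fun x u v =>
  ω (φ x) (fderiv ℝ φ x u) (fderiv ℝ φ x v)

/-- Model for the cotangent bundle `T*Q` of the manifold `Q = E`. -/
abbrev Cot (E : Type*) [NormedAddCommGroup E] [NormedSpace ℝ E] := E × (E →L[ℝ] ℝ)

/-- The tautological (canonical) one-form `Θ_Q` on `T*Q`. -/
def taut : Cot E → Cot E → ℝ := fun z v => z.2 v.1

/-- The canonical symplectic two-form `Ω_Q = -dΘ_Q` on `T*Q`. -/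
def canSymp : Cot E → Cot E → Cot E → ℝ := fun z u v => -(extDer1 taut z u v)
/-- Model for the `k`-cotangent bundle `T_k*Q = T*Q ⊕_Q ⋯ ⊕_Q T*Q` of `Q = E`. -/
abbrev kCot (E : Type*) [NormedAddCommGroup E] [NormedSpace ℝ E] (k : ℕ) :=
  E × (Fin k → E →L[ℝ] ℝ)

/-- The projection `π^κ : T_k*Q → T*Q` onto the `κ`-th summand. -/
def kproj {k : ℕ} (κ : Fin k) : kCot E k → Cot E := fun z => (z.1, z.2 κ)

/-- The canonical two-forms `Ω^κ = (π^κ)*Ω_Q` on `T_k*Q`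
(`π^κ` is linear, so its pullback is plain composition). -/
def kForm {k : ℕ} (κ : Fin k) : kCot E k → kCot E k → kCot E k → ℝ :=
  fun z u v => canSymp (kproj κ z) (kproj κ u) (kproj κ v)


lemma canSymp_eq (z u v : Cot E) : canSymp z u v = v.2 u.1 - u.2 v.1 := by
  have h : ∀ w : Cot E, fderiv ℝ (fun y : Cot E => taut y w) z =
      ((ContinuousLinearMap.apply ℝ ℝ w.1).comp
        (ContinuousLinearMap.snd ℝ E (E →L[ℝ] ℝ))) := fun w =>
    ((ContinuousLinearMap.apply ℝ ℝ w.1).comp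
        (ContinuousLinearMap.snd ℝ E (E →L[ℝ] ℝ))).fderiv
  simp only [canSymp, extDer1, h]
  simp [ContinuousLinearMap.apply]

lemma kForm_eq {k : ℕ} (κ : Fin k) (z u v : kCot E k) :
    kForm κ z u v = v.2 κ u.1 - u.2 κ v.1 := by
  rw [kForm, canSymp_eq]; rfl

/-- (Lemma on pullbacks along a section of `T_k*Q`.)
If the `k`-vector field `X - T^kγ(Y)` lies, along the image of the section `γ`
(with `Γ q = (q, γ q)`), in the kernel of the map `♭ : (X_1,…,X_k) ↦ Σ_κ ι_{X_κ}Ω^κ`,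
then `γ*(Σ_κ ι_{X_κ}Ω^κ) = Σ_κ ι_{Y_κ}(γ*Ω^κ)`. -/
theorem pullback_contraction_commute
    [FiniteDimensional ℝ E] {k : ℕ}
    (γ : E → Fin k → E →L[ℝ] ℝ) (hγs : ContDiff ℝ (⊤ : ℕ∞) γ)
    (Γ : E → kCot E k) (hΓ : ∀ q, Γ q = (q, γ q))
    (X : Fin k → kCot E k → kCot E k)
    (Y : Fin k → E → E)
    (hker : ∀ q (v : kCot E k),
      ∑ κ, kForm κ (Γ q) (X κ (Γ q) - fderiv ℝ Γ q (Y κ q)) v = 0) :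
    ∀ q (u : E),
      (pb1 Γ (fun z v => ∑ κ, kForm κ z (X κ z) v)) q u =
        ∑ κ, (pb2 Γ (kForm κ)) q (Y κ q) u := by
  intro q u
  have h := hker q (fderiv ℝ Γ q u)
  simp only [kForm_eq, pb1, pb2, Prod.snd_sub, Prod.fst_sub, Pi.sub_apply,
    ContinuousLinearMap.sub_apply, map_sub] at h ⊢
  have : ∑ κ, (((fderiv ℝ Γ q u).2 κ ((X κ (Γ q)).1) - (X κ (Γ q)).2 κ (fderiv ℝ Γ q u).1)
      - ((fderiv ℝ Γ q u).2 κ ((fderiv ℝ Γ q (Y κ q)).1)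
        - (fderiv ℝ Γ q (Y κ q)).2 κ (fderiv ℝ Γ q u).1)) = 0 := by
    rw [← h]; congr 1; funext κ; ring
  rw [Finset.sum_sub_distrib] at this
  linarith [this]
end
end

section
/- Let Q be a smooth manifold, ϑ a closed one-form on Q, and W¹,…,W^k smooth functions on Q. Define the one-forms d_ϑW^κ := dW^κ − W^κϑ and the section γ = (d_ϑW¹,…,d_ϑW^k) of the bundle T_{k,θ}*Q → Q. Then d_ϑ(d_ϑW^κ) = 0 for every κ, and hence the image im(d_ϑW¹) ⊕_Q … ⊕_Q im(d_ϑW^k) of γ is a Lagrangian submanifold of the locally conformal k-symplectic manifold (T_{k,θ}*Q, [Ω_θ^κ], θ, V). -/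
noncomputable section

open scoped BigOperators

variable {E F : Type*} [NormedAddCommGroup E] [NormedSpace ℝ E]
  [NormedAddCommGroup F] [NormedSpace ℝ F]

/-- The almost symplectic two-form `Ω_θ = -dΘ_Q + (π_Q*ϑ) ∧ Θ_Q` on `T*Q`,
for the Lee form `θ = π_Q*ϑ`. -/
def lcsForm (ϑ : E → E →L[ℝ] ℝ) : Cot E → Cot E → Cot E → ℝ := fun z u v =>
  canSymp z u v + (ϑ z.1 u.1 * taut z v - ϑ z.1 v.1 * taut z u)
/-- The two-forms `Ω_θ^κ = (π^κ)*Ω_θ` of the locally conformal `k`-symplectic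
structure on `T_{k,θ}*Q`. -/
def lcksForm (ϑ : E → E →L[ℝ] ℝ) {k : ℕ} (κ : Fin k) :
    kCot E k → kCot E k → kCot E k → ℝ :=
  fun z u v => lcsForm ϑ (kproj κ z) (kproj κ u) (kproj κ v)
/-- The `k`-symplectic orthogonal of a set `S` of tangent vectors at `z`, with respect
to a family of two-forms `Ω^κ`. -/
def kPerp {k : ℕ} (Ω : Fin k → kCot E k → kCot E k → kCot E k → ℝ) (z : kCot E k)
    (S : Set (kCot E k)) : Set (kCot E k) :=
  {v | ∀ w ∈ S, ∀ κ, Ω κ z v w = 0}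

/-! For `γ = d_ϑW = dW - Wϑ` one has `dγ = -dW ∧ ϑ - W dϑ = ϑ ∧ dW = ϑ ∧ γ`, using `d²W = 0`
(symmetry of the second derivative) and `dϑ = 0`. At a point `(q, γ(q))` of the section, the
form `Ω_θ^κ` pairs a vector `v` with the tangent vector `(b, Dγ^κ(q) b)` to
`Dγ^κ(q) v₁ b - v₂^κ b` up to the term `d_ϑγ^κ(b, v₁)`, which vanishes; so `v` is orthogonal
to the tangent space exactly when `v₂^κ = Dγ^κ(q) v₁` for all `κ`, i.e. when `v` is tangent. -/

section Calculus

variable {G : Type*} [NormedAddCommGroup G] [NormedSpace ℝ G]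

theorem fderiv_clm_apply_const_apply {c : G → E →L[ℝ] ℝ} {x : G}
    (hc : DifferentiableAt ℝ c x) (v : E) (u : G) :
    fderiv ℝ (fun y => c y v) x u = fderiv ℝ c x u v := by
  rw [fderiv_clm_apply hc (differentiableAt_const v)]
  simp

theorem extDer1_clm_apply {α : E → E →L[ℝ] ℝ} {x : E} (hα : DifferentiableAt ℝ α x)
    (u v : E) :
    extDer1 (fun y w => α y w) x u v = fderiv ℝ α x u v - fderiv ℝ α x v u := by
  rw [extDer1, fderiv_clm_apply_const_apply hα, fderiv_clm_apply_const_apply hα]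

end Calculus

theorem extDer1_taut (z u v : Cot E) : extDer1 (taut (E := E)) z u v = u.2 v.1 - v.2 u.1 := by
  have hlin : ∀ w : Cot E, (fun y : Cot E => taut y w)
      = ⇑((ContinuousLinearMap.apply ℝ ℝ w.1).comp
          (ContinuousLinearMap.snd ℝ E (E →L[ℝ] ℝ))) := fun _ => rfl
  simp only [extDer1, hlin, ContinuousLinearMap.fderiv]
  rfl

theorem lcsForm_apply (ϑ : E → E →L[ℝ] ℝ) (z u v : Cot E) :
    lcsForm ϑ z u v = v.2 u.1 - u.2 v.1 + (ϑ z.1 u.1 * z.2 v.1 - ϑ z.1 v.1 * z.2 u.1) := by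
  rw [lcsForm, canSymp, extDer1_taut, taut, taut]
  ring

/-- The Lichnerowicz differential `d_ϑW`. -/
def twistedDiff (ϑ : E → E →L[ℝ] ℝ) (W : E → ℝ) : E → E →L[ℝ] ℝ :=
  fun q => fderiv ℝ W q - W q • ϑ q

section TwistedDiff

variable {ϑ : E → E →L[ℝ] ℝ} {W : E → ℝ} {q : E}

theorem hasFDerivAt_twistedDiff (hW : ContDiffAt ℝ 2 W q) (hϑ : DifferentiableAt ℝ ϑ q) :
    HasFDerivAt (twistedDiff ϑ W)
      (fderiv ℝ (fderiv ℝ W) q - (W q • fderiv ℝ ϑ q + (fderiv ℝ W q).smulRight (ϑ q))) q := by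
  have hW' : DifferentiableAt ℝ (fderiv ℝ W) q :=
    (hW.fderiv_right (m := 1) (by norm_num)).differentiableAt one_ne_zero
  have hW₀ : DifferentiableAt ℝ W q := hW.differentiableAt two_ne_zero
  exact hW'.hasFDerivAt.sub (hW₀.hasFDerivAt.smul hϑ.hasFDerivAt)

theorem differentiableAt_twistedDiff (hW : ContDiffAt ℝ 2 W q) (hϑ : DifferentiableAt ℝ ϑ q) :
    DifferentiableAt ℝ (twistedDiff ϑ W) q :=
  (hasFDerivAt_twistedDiff hW hϑ).differentiableAt

theorem extDer1_twistedDiff_sub_wedge11 (hW : ContDiffAt ℝ 2 W q)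
    (hϑ : DifferentiableAt ℝ ϑ q) (hϑc : ∀ u v, extDer1 (fun y w => ϑ y w) q u v = 0)
    (u v : E) :
    extDer1 (fun y w => twistedDiff ϑ W y w) q u v
      - wedge11 (fun y w => ϑ y w) (fun y w => twistedDiff ϑ W y w) q u v = 0 := by
  have hWsymm : fderiv ℝ (fderiv ℝ W) q u v = fderiv ℝ (fderiv ℝ W) q v u :=
    hW.isSymmSndFDerivAt (by simp) u v
  have hϑsymm : fderiv ℝ ϑ q u v = fderiv ℝ ϑ q v u := by
    rw [← sub_eq_zero, ← extDer1_clm_apply hϑ]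
    exact hϑc u v
  rw [extDer1_clm_apply (differentiableAt_twistedDiff hW hϑ),
    (hasFDerivAt_twistedDiff hW hϑ).fderiv]
  simp only [wedge11, twistedDiff, sub_apply, add_apply, smul_apply,
    ContinuousLinearMap.smulRight_apply, smul_eq_mul, hWsymm, hϑsymm]
  ring

end TwistedDiff

section Lagrangian

variable {k : ℕ} {ϑ : E → E →L[ℝ] ℝ} {γ : Fin k → E → E →L[ℝ] ℝ} {q : E}

theorem hasFDerivAt_section (hγ : ∀ κ, DifferentiableAt ℝ (γ κ) q) :
    HasFDerivAt (fun y => ((y, fun κ => γ κ y) : kCot E k))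
      ((ContinuousLinearMap.id ℝ E).prod (ContinuousLinearMap.pi fun κ => fderiv ℝ (γ κ) q)) q :=
  (hasFDerivAt_id q).prodMk (hasFDerivAt_pi.2 fun κ => (hγ κ).hasFDerivAt)

theorem lcksForm_section_apply (hγ : ∀ κ, DifferentiableAt ℝ (γ κ) q)
    (hγc : ∀ κ u v, extDer1 (fun y w => γ κ y w) q u v
      - wedge11 (fun y w => ϑ y w) (fun y w => γ κ y w) q u v = 0)
    (κ : Fin k) (v : kCot E k) (b : E) :
    lcksForm ϑ κ (q, fun κ => γ κ q) v (b, fun κ => fderiv ℝ (γ κ) q b)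
      = fderiv ℝ (γ κ) q v.1 b - v.2 κ b := by
  have hclosed := hγc κ b v.1
  rw [extDer1_clm_apply (hγ κ), wedge11] at hclosed
  rw [lcksForm, lcsForm_apply]
  simp only [kproj]
  linarith

theorem kPerp_range_fderiv_section (hγ : ∀ κ, DifferentiableAt ℝ (γ κ) q)
    (hγc : ∀ κ u v, extDer1 (fun y w => γ κ y w) q u v
      - wedge11 (fun y w => ϑ y w) (fun y w => γ κ y w) q u v = 0) :
    kPerp (fun κ : Fin k => lcksForm ϑ κ) (q, fun κ => γ κ q)
        (Set.range (fderiv ℝ (fun y => ((y, fun κ => γ κ y) : kCot E k)) q))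
      = Set.range (fderiv ℝ (fun y => ((y, fun κ => γ κ y) : kCot E k)) q) := by
  rw [(hasFDerivAt_section hγ).fderiv]
  ext v
  simp only [kPerp, Set.mem_ofPred_eq, Set.mem_range, forall_exists_index,
    forall_apply_eq_imp_iff, ContinuousLinearMap.prod_apply, ContinuousLinearMap.coe_pi',
    ContinuousLinearMap.id_apply, lcksForm_section_apply hγ hγc, sub_eq_zero]
  constructor
  · intro hv
    exact ⟨v.1, Prod.ext rfl (funext fun κ => ContinuousLinearMap.ext fun b => hv b κ)⟩
  · rintro ⟨a, rfl⟩ b κ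
    rfl

end Lagrangian

theorem dW_section_lagrangian_general
    {k : ℕ}
    (ϑ : E → E →L[ℝ] ℝ) (hϑs : ContDiff ℝ (⊤ : ℕ∞) ϑ)
    (hϑc : ∀ x u v, extDer1 (fun y w => ϑ y w) x u v = 0)
    (W : Fin k → E → ℝ) (hW : ∀ κ, ContDiff ℝ (⊤ : ℕ∞) (W κ))
    (γ : Fin k → E → E →L[ℝ] ℝ)
    (hγ : ∀ κ q, γ κ q = fderiv ℝ (W κ) q - W κ q • ϑ q)
    (Γ : E → kCot E k) (hΓ : ∀ q, Γ q = (q, fun κ => γ κ q)) :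
    (∀ (κ : Fin k) q u v,
      extDer1 (fun y w => γ κ y w) q u v
        - wedge11 (fun y w => ϑ y w) (fun y w => γ κ y w) q u v = 0) ∧
    (∀ q, kPerp (fun κ : Fin k => lcksForm ϑ κ) (Γ q)
        (Set.range (fderiv ℝ Γ q)) = Set.range (fderiv ℝ Γ q)) := by
  obtain rfl : γ = fun κ => twistedDiff ϑ (W κ) := funext fun κ => funext (hγ κ)
  obtain rfl : Γ = fun q => (q, fun κ => twistedDiff ϑ (W κ) q) := funext hΓ
  have hW₂ : ∀ κ q, ContDiffAt ℝ 2 (W κ) q := fun κ q => (hW κ).contDiffAt.of_le (WithTop.coe_le_coe.2 le_top)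
  have hϑd : ∀ q, DifferentiableAt ℝ ϑ q := fun q => hϑs.differentiable (by simp) q
  have hclosed : ∀ κ q u v, extDer1 (fun y w => twistedDiff ϑ (W κ) y w) q u v
      - wedge11 (fun y w => ϑ y w) (fun y w => twistedDiff ϑ (W κ) y w) q u v = 0 :=
    fun κ q => extDer1_twistedDiff_sub_wedge11 (hW₂ κ q) (hϑd q) (hϑc q)
  exact ⟨hclosed, fun q => kPerp_range_fderiv_section
    (fun κ => differentiableAt_twistedDiff (hW₂ κ q) (hϑd q)) (fun κ => hclosed κ q)⟩

/-- For a closed one-form `ϑ` on `Q = E` and smooth functions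
`W^1,…,W^k` on `Q`, the one-forms `γ^κ = d_ϑW^κ = dW^κ - W^κ ϑ` satisfy
`d_ϑ(d_ϑW^κ) = 0` for all `κ`, and hence the image of the section
`γ = (d_ϑW^1,…,d_ϑW^k)` of `T_{k,θ}*Q → Q` is a Lagrangian submanifold of the
locally conformal `k`-symplectic manifold `(T_{k,θ}*Q, [Ω_θ^κ], θ, V)`. -/
theorem dW_section_lagrangian
    [FiniteDimensional ℝ E] {k : ℕ}
    (ϑ : E → E →L[ℝ] ℝ) (hϑs : ContDiff ℝ (⊤ : ℕ∞) ϑ)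
    (hϑc : ∀ x u v, extDer1 (fun y w => ϑ y w) x u v = 0)
    (W : Fin k → E → ℝ) (hW : ∀ κ, ContDiff ℝ (⊤ : ℕ∞) (W κ))
    (γ : Fin k → E → E →L[ℝ] ℝ)
    (hγ : ∀ κ q, γ κ q = fderiv ℝ (W κ) q - W κ q • ϑ q)
    (Γ : E → kCot E k) (hΓ : ∀ q, Γ q = (q, fun κ => γ κ q)) :
    (∀ (κ : Fin k) q u v,
      extDer1 (fun y w => γ κ y w) q u v
        - wedge11 (fun y w => ϑ y w) (fun y w => γ κ y w) q u v = 0) ∧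
    (∀ q, kPerp (fun κ : Fin k => lcksForm ϑ κ) (Γ q)
        (Set.range (fderiv ℝ Γ q)) = Set.range (fderiv ℝ Γ q)) :=
  dW_section_lagrangian_general ϑ hϑs hϑc W hW γ hγ Γ hΓ
end
end
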